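/- arXiv:2508.17489 — 6 statements merged into one kernel-verified Lean document; each statement's English description precedes it below -/
import Mathlib

section
/- A solution S maximizes community satisfaction over all solutions if and only if it satisfies the relative majority condition, i.e., for every paragraph p: if the relative approval of p strictly exceeds its relative disapproval then S p = 1, and if the relative disapproval of p strictly exceeds its relative approval then S p = -1. -/
open Finset

/-- Number of paragraphs that agent `a` voted on (nonzero stance). -/
def Npar {A : Type*} [Fintype A] {k : ℕ} (σ : A → Fin k → ℤ) (a : A) : ℕ :=
  (Finset.univ.filter (fun p : Fin k => σ a p ≠ 0)).card

/-- Relative approval of paragraph `p`. -/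
noncomputable def relApp {A : Type*} [Fintype A] {k : ℕ} (σ : A → Fin k → ℤ) (p : Fin k) : ℝ :=
  ∑ a ∈ Finset.univ.filter (fun a : A => σ a p = 1), (1 : ℝ) / (Npar σ a)

/-- Relative disapproval of paragraph `p`. -/
noncomputable def relDis {A : Type*} [Fintype A] {k : ℕ} (σ : A → Fin k → ℤ) (p : Fin k) : ℝ :=
  ∑ a ∈ Finset.univ.filter (fun a : A => σ a p = -1), (1 : ℝ) / (Npar σ a)

/-- Community satisfaction of solution `S` under stance matrix `σ`. -/
noncomputable def Sat {A : Type*} [Fintype A] {k : ℕ} (σ : A → Fin k → ℤ) (S : Fin k → ℤ) : ℝ :=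
  ∑ a : A, ∑ p : Fin k, if σ a p = S p then (1 : ℝ) / (Npar σ a) else 0

/-- Pointwise contribution of paragraph `p` under choice `v`. -/
noncomputable def contrib {A : Type*} [Fintype A] {k : ℕ} (σ : A → Fin k → ℤ)
    (p : Fin k) (v : ℤ) : ℝ :=
  if v = 1 then relApp σ p else relDis σ p

lemma Sat_eq_sum_contrib {A : Type*} [Fintype A] {k : ℕ} (σ : A → Fin k → ℤ)
    (S : Fin k → ℤ) (hS : ∀ p, S p = -1 ∨ S p = 1) :
    Sat σ S = ∑ p : Fin k, contrib σ p (S p) := by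
  rw [Sat, Finset.sum_comm]
  refine Finset.sum_congr rfl fun p _ => ?_
  rw [show (∑ a : A, if σ a p = S p then (1:ℝ) / (Npar σ a) else 0)
      = ∑ a ∈ Finset.univ.filter (fun a : A => σ a p = S p), (1:ℝ) / (Npar σ a)
      from (Finset.sum_filter _ _).symm]
  rcases hS p with h | h <;> rw [contrib] <;> simp [h, relApp, relDis]

/-- A solution maximizes community satisfaction iff it satisfies the relative majority
condition. -/
theorem swm_iff_relative_majority {A : Type*} [Fintype A] [Nonempty A] {k : ℕ}
    (σ : A → Fin k → ℤ) (hσ : ∀ a p, σ a p = -1 ∨ σ a p = 0 ∨ σ a p = 1)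
    (hN : ∀ a, 1 ≤ Npar σ a)
    (S : Fin k → ℤ) (hS : ∀ p, S p = -1 ∨ S p = 1) :
    (∀ S' : Fin k → ℤ, (∀ p, S' p = -1 ∨ S' p = 1) → Sat σ S' ≤ Sat σ S) ↔
      (∀ p : Fin k,
        (relDis σ p < relApp σ p → S p = 1) ∧ (relApp σ p < relDis σ p → S p = -1)) := by
  constructor
  · intro hmax p
    -- helper: switching paragraph p to value v cannot increase Sat
    have key : ∀ v : ℤ, (v = -1 ∨ v = 1) → contrib σ p v ≤ contrib σ p (S p) := by
      intro v hv
      have hS' : ∀ q, Function.update S p v q = -1 ∨ Function.update S p v q = 1 := by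
        intro q
        by_cases hq : q = p
        · subst hq; simp [hv]
        · simp [Function.update_of_ne hq, hS q]
      have h := hmax (Function.update S p v) hS'
      rw [Sat_eq_sum_contrib σ _ hS', Sat_eq_sum_contrib σ S hS] at h
      rw [← Finset.add_sum_erase _ _ (Finset.mem_univ p),
          ← Finset.add_sum_erase _ (fun q => contrib σ q (S q)) (Finset.mem_univ p)] at h
      have heq : ∑ q ∈ Finset.univ.erase p, contrib σ q (Function.update S p v q)
          = ∑ q ∈ Finset.univ.erase p, contrib σ q (S q) := by
        refine Finset.sum_congr rfl fun q hq => ?_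
        rw [Function.update_of_ne (Finset.ne_of_mem_erase hq)]
      rw [Function.update_self, heq] at h
      linarith
    constructor
    · intro hlt
      rcases hS p with h | h
      · exfalso
        have := key 1 (Or.inr rfl)
        rw [contrib, contrib, h] at this
        norm_num at this
        linarith
      · exact h
    · intro hlt
      rcases hS p with h | h
      · exact h
      · exfalso
        have := key (-1) (Or.inl rfl)
        rw [contrib, contrib, h] at this
        norm_num at this
        linarith
  · intro hmaj S' hS'
    rw [Sat_eq_sum_contrib σ S' hS', Sat_eq_sum_contrib σ S hS]
    refine Finset.sum_le_sum fun p _ => ?_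
    rcases lt_trichotomy (relDis σ p) (relApp σ p) with h | h | h
    · have h1 := (hmaj p).1 h
      rw [contrib, contrib, h1]
      rcases hS' p with h' | h' <;> simp [h'] <;> linarith
    · rcases hS p with hp | hp <;> rcases hS' p with hp' | hp' <;>
        simp [contrib, hp, hp', h, le_refl]
    · have h1 := (hmaj p).2 h
      rw [contrib, contrib, h1]
      rcases hS' p with h' | h' <;> simp [h'] <;> linarith
end

section
/- If two solutions S and S' agree on all paragraphs except a single paragraph p, with S p = 1 and S' p = -1, and the relative approval of p strictly exceeds its relative disapproval, then the community satisfaction of S is strictly greater than that of S'. -/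
open Finset

/-- Flipping a single paragraph from `-1` to `1` strictly increases community satisfaction
when its relative approval strictly exceeds its relative disapproval. -/
theorem single_flip_increases_satisfaction {A : Type*} [Fintype A] [Nonempty A] {k : ℕ}
    (σ : A → Fin k → ℤ) (hσ : ∀ a p, σ a p = -1 ∨ σ a p = 0 ∨ σ a p = 1)
    (hN : ∀ a, 1 ≤ Npar σ a)
    (S S' : Fin k → ℤ) (hS : ∀ q, S q = -1 ∨ S q = 1) (hS' : ∀ q, S' q = -1 ∨ S' q = 1)
    (p : Fin k) (hagree : ∀ q : Fin k, q ≠ p → S q = S' q)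
    (hSp : S p = 1) (hS'p : S' p = -1)
    (hmaj : relDis σ p < relApp σ p) :
    Sat σ S' < Sat σ S := by
  have key : Sat σ S - Sat σ S' = relApp σ p - relDis σ p := by
    unfold Sat relApp relDis
    rw [← Finset.sum_sub_distrib, Finset.sum_filter, Finset.sum_filter,
      ← Finset.sum_sub_distrib]
    apply Finset.sum_congr rfl
    intro a _
    rw [← Finset.sum_sub_distrib]
    rw [Fintype.sum_eq_single p (fun q hq => by rw [hagree q hq]; ring)]
    rw [hSp, hS'p]
  linarith
end

section
/- No RM rule is stable: for every aggregation rule R that is an RM rule, there exists an event list E such that for every extension E' of E there exists a further extension E'' with R(E ++ E') ≠ R(E ++ E' ++ E''). -/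
open Finset

/-- A vote value: `-1`, `0`, or `1`. -/
abbrev EventVal : Type := {v : ℤ // v = -1 ∨ v = 0 ∨ v = 1}

/-- An event: an agent, a paragraph, and a vote value. -/
abbrev Event (A : Type) (k : ℕ) : Type := A × Fin k × EventVal

/-- The stance of agent `a` on paragraph `p` under event list `E`: the value of the last
event of `a` on `p`, or `0` if there is none. -/
def stance {A : Type} [DecidableEq A] {k : ℕ} (E : List (Event A k)) (a : A) (p : Fin k) : ℤ :=
  E.foldl (fun s e => if e.1 = a ∧ e.2.1 = p then e.2.2.1 else s) 0

/-- Number of paragraphs with nonzero stance of agent `a` under `E`. -/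
def Nev {A : Type} [Fintype A] [DecidableEq A] {k : ℕ} (E : List (Event A k)) (a : A) : ℕ :=
  (Finset.univ.filter (fun p : Fin k => stance E a p ≠ 0)).card

/-- Relative approval of paragraph `p` under event list `E`. -/
noncomputable def relAppE {A : Type} [Fintype A] [DecidableEq A] {k : ℕ}
    (E : List (Event A k)) (p : Fin k) : ℝ :=
  ∑ a ∈ Finset.univ.filter (fun a : A => stance E a p = 1), (1 : ℝ) / (Nev E a)

/-- Relative disapproval of paragraph `p` under event list `E`. -/
noncomputable def relDisE {A : Type} [Fintype A] [DecidableEq A] {k : ℕ}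
    (E : List (Event A k)) (p : Fin k) : ℝ :=
  ∑ a ∈ Finset.univ.filter (fun a : A => stance E a p = -1), (1 : ℝ) / (Nev E a)

/-- An aggregation rule is stable if every event list admits an extension after which the
output never changes. -/
def Stable {A : Type} {k : ℕ} (R : List (Event A k) → Finset (Fin k)) : Prop :=
  ∀ E : List (Event A k), ∃ E' : List (Event A k),
    ∀ E'' : List (Event A k), R (E ++ E') = R (E ++ E' ++ E'')

section Aux

variable {A : Type} [Fintype A] [DecidableEq A] {k : ℕ}

/-- The zero vote value. -/
def zeroVal : EventVal := ⟨0, by norm_num⟩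

/-- A list of events where every agent votes `val q` on each paragraph `q`. -/
noncomputable def resetList (val : Fin k → EventVal) : List (Event A k) :=
  Finset.univ.toList.flatMap (fun a : A => (List.finRange k).map (fun q => (a, q, val q)))

lemma foldl_no_match (a : A) (p : Fin k) (F : List (Event A k))
    (h : ∀ e ∈ F, ¬(e.1 = a ∧ e.2.1 = p)) (s : ℤ) :
    F.foldl (fun s e => if e.1 = a ∧ e.2.1 = p then e.2.2.1 else s) s = s := by
  induction F generalizing s with
  | nil => rfl
  | cons e F ih =>
    rw [List.foldl_cons, if_neg (h e (by simp))]
    exact ih (fun e' he' => h e' (by simp [he'])) s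

lemma stance_reset (val : Fin k → EventVal) (L : List (Event A k)) (a : A) (p : Fin k) :
    stance (L ++ resetList val) a p = (val p).1 := by
  unfold stance resetList
  rw [List.foldl_append]
  obtain ⟨l1, l2, hl⟩ := List.append_of_mem (Finset.mem_toList.mpr (Finset.mem_univ a))
  have hnd : (Finset.univ.toList (α := A)).Nodup := Finset.nodup_toList _
  rw [hl] at hnd
  have ha1 : a ∉ l1 := fun hmem =>
    (List.disjoint_of_nodup_append hnd) hmem (by simp)
  have ha2 : a ∉ l2 := by
    have := (List.Nodup.of_append_right hnd)
    simpa using (List.nodup_cons.mp this).1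
  rw [hl, List.flatMap_append, List.flatMap_cons, List.foldl_append, List.foldl_append]
  rw [foldl_no_match a p (l2.flatMap _) (by
    intro e he
    simp only [List.mem_flatMap, List.mem_map] at he
    obtain ⟨b, hb, q, _, rfl⟩ := he
    rintro ⟨rfl, -⟩
    exact ha2 hb)]
  obtain ⟨m1, m2, hm⟩ := List.append_of_mem (List.mem_finRange p)
  have hmd : (List.finRange k).Nodup := List.nodup_finRange k
  rw [hm] at hmd
  have hp2 : p ∉ m2 := by
    have := (List.Nodup.of_append_right hmd)
    simpa using (List.nodup_cons.mp this).1
  rw [hm, List.map_append, List.map_cons, List.foldl_append, List.foldl_cons,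
    if_pos ⟨rfl, rfl⟩]
  exact foldl_no_match a p _ (by
    intro e he
    simp only [List.mem_map] at he
    obtain ⟨q, hq, rfl⟩ := he
    rintro ⟨-, rfl⟩
    exact hp2 hq) _

/-- Everyone votes `v` on `p` and `0` elsewhere. -/
def valAt (v : EventVal) (p : Fin k) : Fin k → EventVal :=
  fun q => if q = p then v else zeroVal

lemma stance_valAt (v : EventVal) (p : Fin k) (L : List (Event A k)) (a : A) (q : Fin k) :
    stance (L ++ resetList (valAt v p)) a q = if q = p then v.1 else 0 := by
  rw [stance_reset]
  unfold valAt
  split <;> simp [zeroVal]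

lemma Nev_valAt (v : EventVal) (hv : v.1 ≠ 0) (p : Fin k) (L : List (Event A k)) (a : A) :
    Nev (L ++ resetList (valAt v p)) a = 1 := by
  unfold Nev
  have : (Finset.univ.filter
      (fun q : Fin k => stance (L ++ resetList (valAt v p)) a q ≠ 0)) = {p} := by
    ext q
    simp only [Finset.mem_filter, Finset.mem_univ, true_and, Finset.mem_singleton,
      stance_valAt]
    by_cases hq : q = p <;> simp [hq, hv]
  rw [this, Finset.card_singleton]

lemma relApp_valAt (v : EventVal) (hv : v.1 ≠ 0) (p : Fin k) (L : List (Event A k)) :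
    relAppE (L ++ resetList (valAt v p)) p
      = if v.1 = 1 then (Fintype.card A : ℝ) else 0 := by
  unfold relAppE
  have hfilter : (Finset.univ.filter
      (fun a : A => stance (L ++ resetList (valAt v p)) a p = 1))
      = if v.1 = 1 then Finset.univ else ∅ := by
    ext a
    simp only [Finset.mem_filter, Finset.mem_univ, true_and, stance_valAt, if_pos rfl]
    by_cases h1 : (v : ℤ) = 1 <;> by_cases h2 : (v : ℤ) = -1 <;> simp_all
  rw [hfilter]
  split
  · rw [Finset.sum_congr rfl (fun a _ => by rw [Nev_valAt v hv p L a])]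
    simp
  · simp

lemma relDis_valAt (v : EventVal) (hv : v.1 ≠ 0) (p : Fin k) (L : List (Event A k)) :
    relDisE (L ++ resetList (valAt v p)) p
      = if v.1 = -1 then (Fintype.card A : ℝ) else 0 := by
  unfold relDisE
  have hfilter : (Finset.univ.filter
      (fun a : A => stance (L ++ resetList (valAt v p)) a p = -1))
      = if v.1 = -1 then Finset.univ else ∅ := by
    ext a
    simp only [Finset.mem_filter, Finset.mem_univ, true_and, stance_valAt, if_pos rfl]
    by_cases h1 : (v : ℤ) = 1 <;> by_cases h2 : (v : ℤ) = -1 <;> simp_all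
  rw [hfilter]
  split
  · rw [Finset.sum_congr rfl (fun a _ => by rw [Nev_valAt v hv p L a])]
    simp
  · simp

end Aux

/-- No RM rule is stable. -/
theorem no_rm_rule_is_stable {A : Type} [Fintype A] [DecidableEq A] [Nonempty A]
    {k : ℕ} (hk : 1 ≤ k)
    (R : List (Event A k) → Finset (Fin k))
    (hRM : ∀ (E : List (Event A k)) (p : Fin k),
      (relDisE E p < relAppE E p → p ∈ R E) ∧ (relAppE E p < relDisE E p → p ∉ R E)) :
    ∃ E : List (Event A k), ∀ E' : List (Event A k), ∃ E'' : List (Event A k),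
      R (E ++ E') ≠ R (E ++ E' ++ E'') := by
  have hcard : (0 : ℝ) < (Fintype.card A : ℝ) := by
    exact_mod_cast Fintype.card_pos
  refine ⟨[], fun E' => ?_⟩
  set p : Fin k := ⟨0, hk⟩ with hp
  by_cases hmem : p ∈ R ([] ++ E')
  · -- force p out by everyone voting -1
    have vneg : EventVal := ⟨-1, by norm_num⟩
    refine ⟨resetList (valAt (⟨-1, by norm_num⟩ : EventVal) p), fun hEq => ?_⟩
    have hout : p ∉ R ([] ++ E' ++ resetList (valAt (⟨-1, by norm_num⟩ : EventVal) p)) := by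
      apply (hRM _ p).2
      rw [relApp_valAt _ (by norm_num) p, relDis_valAt _ (by norm_num) p]
      norm_num [hcard]
    rw [← hEq] at hout
    exact hout hmem
  · -- force p in by everyone voting +1
    refine ⟨resetList (valAt (⟨1, by norm_num⟩ : EventVal) p), fun hEq => ?_⟩
    have hin : p ∈ R ([] ++ E' ++ resetList (valAt (⟨1, by norm_num⟩ : EventVal) p)) := by
      apply (hRM _ p).1
      rw [relApp_valAt _ (by norm_num) p, relDis_valAt _ (by norm_num) p]
      norm_num [hcard]
    rw [← hEq] at hin
    exact hmem hin
end

section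
/- No aggregation rule is both a social welfare maximizer and stable: there is no rule R such that for every event list E the solution induced by R(E) maximizes community satisfaction with respect to the stance of E, and R is stable. -/
open Finset

/-- Community satisfaction of a solution `S` with respect to the stance of event list `E`
(summing over agents who voted on at least one paragraph). -/
noncomputable def SatE {A : Type} [Fintype A] [DecidableEq A] {k : ℕ}
    (E : List (Event A k)) (S : Fin k → ℤ) : ℝ :=
  ∑ a ∈ Finset.univ.filter (fun a : A => 1 ≤ Nev E a),
    ∑ p : Fin k, if stance E a p = S p then (1 : ℝ) / (Nev E a) else 0

/-!
Stability yields an extension `E'` after which the output of `R` is frozen. Append to `E'` a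
block in which every agent approves every paragraph: all stances become `1`, so the satisfaction
of a solution is proportional to the number of paragraphs it accepts and a welfare maximiser must
accept all of them. Appending instead a block of unanimous rejections forces it to accept none.
Both outputs equal `R E'`, which is impossible once there is a paragraph.
-/

noncomputable def unanimousVote (A : Type) [Fintype A] (k : ℕ) (v : EventVal) :
    List (Event A k) :=
  (List.finRange k).flatMap fun p => Finset.univ.toList.map fun a => (a, p, v)

section Fold

variable {A : Type} [DecidableEq A] {k : ℕ} (a : A) (p : Fin k) (v : ℤ)

lemma foldl_stance_self_of_forall_val_eq {L : List (Event A k)} (hL : ∀ e ∈ L, e.2.2.1 = v) :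
    L.foldl (fun s e => if e.1 = a ∧ e.2.1 = p then e.2.2.1 else s) v = v := by
  induction L with
  | nil => rfl
  | cons e t ih =>
    simp only [List.foldl_cons, hL e List.mem_cons_self, ite_self]
    exact ih fun e' he' => hL e' (List.mem_cons_of_mem e he')

lemma foldl_stance_of_forall_val_eq {L : List (Event A k)} (hL : ∀ e ∈ L, e.2.2.1 = v)
    (hmem : ∃ e ∈ L, e.1 = a ∧ e.2.1 = p) (s : ℤ) :
    L.foldl (fun s e => if e.1 = a ∧ e.2.1 = p then e.2.2.1 else s) s = v := by
  induction L generalizing s with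
  | nil => simp at hmem
  | cons e t ih =>
    have hLt : ∀ e' ∈ t, e'.2.2.1 = v := fun e' he' => hL e' (List.mem_cons_of_mem e he')
    rw [List.foldl_cons]
    by_cases he : e.1 = a ∧ e.2.1 = p
    · rw [if_pos he, hL e List.mem_cons_self]
      exact foldl_stance_self_of_forall_val_eq a p v hLt
    · obtain ⟨e', he', hmatch⟩ := hmem
      rcases List.mem_cons.1 he' with rfl | he't
      · exact absurd hmatch he
      · exact ih hLt ⟨e', he't, hmatch⟩ _

end Fold

lemma stance_append_unanimousVote {A : Type} [Fintype A] [DecidableEq A] {k : ℕ}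
    (E : List (Event A k)) (v : EventVal) (a : A) (p : Fin k) :
    stance (E ++ unanimousVote A k v) a p = v := by
  rw [stance, List.foldl_append]
  apply foldl_stance_of_forall_val_eq
  · simp only [unanimousVote, List.mem_flatMap, List.mem_map]
    rintro _ ⟨_, _, _, _, rfl⟩
    rfl
  · exact ⟨(a, p, v), by simp [unanimousVote], rfl, rfl⟩

section Unanimous

variable {A : Type} [Fintype A] [DecidableEq A] {k : ℕ} {E : List (Event A k)} {v : ℤ}

lemma nev_of_unanimous (hv : v ≠ 0) (hE : ∀ a p, stance E a p = v) (a : A) : Nev E a = k := by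
  simp [Nev, hE, hv]

lemma satE_of_unanimous (hk : 1 ≤ k) (hv : v ≠ 0) (hE : ∀ a p, stance E a p = v)
    (S : Fin k → ℤ) :
    SatE E S = Fintype.card A * #{p | S p = v} / k := by
  simp [SatE, nev_of_unanimous hv hE, hk, hE, Finset.sum_ite, eq_comm]
  ring

lemma eq_of_forall_satE_le_of_unanimous [Nonempty A] (hk : 1 ≤ k) (hv : v = -1 ∨ v = 1)
    (hE : ∀ a p, stance E a p = v) {T : Fin k → ℤ}
    (hT : ∀ S : Fin k → ℤ, (∀ p, S p = -1 ∨ S p = 1) → SatE E S ≤ SatE E T) (p : Fin k) :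
    T p = v := by
  have hv0 : v ≠ 0 := by omega
  have hle := hT (fun _ => v) fun _ => hv
  rw [satE_of_unanimous hk hv0 hE, satE_of_unanimous hk hv0 hE] at hle
  have hk' : (0 : ℝ) < k := by exact_mod_cast hk
  have hA : (0 : ℝ) < Fintype.card A := by exact_mod_cast Fintype.card_pos
  have hcard : k ≤ #{p | T p = v} := by
    simpa [div_le_div_iff_of_pos_right hk', mul_le_mul_iff_right₀ hA] using hle
  have huniv : ({p | T p = v} : Finset (Fin k)) = univ :=
    eq_univ_of_card _ (le_antisymm (card_le_univ _) (by simpa using hcard))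
  simpa using huniv.ge (mem_univ p)

end Unanimous

/-- No aggregation rule is both a social welfare maximizer and stable. -/
theorem no_rule_is_swm_and_stable {A : Type} [Fintype A] [DecidableEq A] [Nonempty A]
    {k : ℕ} (hk : 1 ≤ k) :
    ¬ ∃ R : List (Event A k) → Finset (Fin k),
      (∀ (E : List (Event A k)) (S : Fin k → ℤ), (∀ p, S p = -1 ∨ S p = 1) →
        SatE E S ≤ SatE E (fun p => if p ∈ R E then 1 else -1)) ∧
      Stable R := by
  rintro ⟨R, hswm, hstab⟩
  obtain ⟨E', hE'⟩ := hstab []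
  have hfrozen (E'' : List (Event A k)) : R (E' ++ E'') = R E' := by simpa using (hE' E'').symm
  have hinduced (v : EventVal) (hv : v.1 = -1 ∨ v.1 = 1) (p : Fin k) :
      (if p ∈ R E' then (1 : ℤ) else -1) = v := by
    rw [← hfrozen (unanimousVote A k v)]
    exact eq_of_forall_satE_le_of_unanimous hk hv (stance_append_unanimousVote E' v) (hswm _) p
  have hmem : ⟨0, hk⟩ ∈ R E' := by simpa using hinduced ⟨1, by simp⟩ (by simp) ⟨0, hk⟩
  have hnotmem : ⟨0, hk⟩ ∉ R E' := by simpa using hinduced ⟨-1, by simp⟩ (by simp) ⟨0, hk⟩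
  exact hnotmem hmem
end

section
/- No versatile static aggregation rule is stable: if an aggregation rule R is versatile (every subset of paragraphs is attained as R(E) for some event list E) and static (R(E₁) = R(E₂) whenever the stance matrices of E₁ and E₂ coincide), then R is not stable. -/
open Finset

lemma stance_mem {A : Type} [DecidableEq A] {k : ℕ} (E : List (Event A k)) (a : A) (p : Fin k) :
    stance E a p = -1 ∨ stance E a p = 0 ∨ stance E a p = 1 := by
  unfold stance
  suffices h : ∀ (s : ℤ), (s = -1 ∨ s = 0 ∨ s = 1) →
      (E.foldl (fun s e => if e.1 = a ∧ e.2.1 = p then e.2.2.1 else s) s = -1 ∨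
       E.foldl (fun s e => if e.1 = a ∧ e.2.1 = p then e.2.2.1 else s) s = 0 ∨
       E.foldl (fun s e => if e.1 = a ∧ e.2.1 = p then e.2.2.1 else s) s = 1) by
    exact h 0 (Or.inr (Or.inl rfl))
  induction E with
  | nil => intro s hs; simpa using hs
  | cons e E ih =>
    intro s hs
    simp only [List.foldl_cons]
    apply ih
    by_cases hc : e.1 = a ∧ e.2.1 = p
    · simp [hc]; exact e.2.2.2
    · simpa [hc] using hs

lemma foldl_set {A : Type} [DecidableEq A] {k : ℕ} (g : A → Fin k → EventVal)
    (a : A) (p : Fin k) :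
    ∀ (Q : List (A × Fin k)) (init : ℤ),
      List.foldl (fun s e => if e.1 = a ∧ e.2.1 = p then e.2.2.1 else s) init
        (Q.map (fun q => ((q.1, q.2, g q.1 q.2) : Event A k))) =
      if (a, p) ∈ Q then (g a p).1 else init := by
  intro Q
  induction Q with
  | nil => intro init; simp
  | cons q Q ih =>
    intro init
    simp only [List.map_cons, List.foldl_cons, List.mem_cons]
    rw [ih]
    by_cases hQ : (a, p) ∈ Q
    · simp [hQ]
    · by_cases hq : q = (a, p)
      · subst hq; simp [hQ]
      · have : ¬ (q.1 = a ∧ q.2 = p) := by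
          intro ⟨h1, h2⟩; exact hq (Prod.ext h1 h2)
        simp [hQ, Ne.symm hq, this]

lemma stance_append_set {A : Type} [Fintype A] [DecidableEq A] {k : ℕ}
    (E : List (Event A k)) (g : A → Fin k → EventVal) (a : A) (p : Fin k) :
    stance (E ++ (Finset.univ : Finset (A × Fin k)).toList.map
      (fun q => ((q.1, q.2, g q.1 q.2) : Event A k))) a p = (g a p).1 := by
  unfold stance
  rw [List.foldl_append, foldl_set]
  simp

/-- No versatile static aggregation rule is stable. -/
theorem no_versatile_static_rule_is_stable {A : Type} [Fintype A] [DecidableEq A] [Nonempty A]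
    {k : ℕ} (hk : 1 ≤ k)
    (R : List (Event A k) → Finset (Fin k))
    (hVersatile : ∀ P' : Finset (Fin k), ∃ E : List (Event A k), R E = P')
    (hStatic : ∀ E₁ E₂ : List (Event A k),
      (∀ (a : A) (p : Fin k), stance E₁ a p = stance E₂ a p) → R E₁ = R E₂) :
    ¬ Stable R := by
  intro hStable
  obtain ⟨E', hE'⟩ := hStable []
  set p0 : Fin k := ⟨0, hk⟩
  obtain ⟨F₀, hF₀⟩ := hVersatile ∅
  obtain ⟨F₁, hF₁⟩ := hVersatile {p0}
  have key : ∀ F : List (Event A k), ∃ L : List (Event A k), R ([] ++ E' ++ L) = R F := by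
    intro F
    refine ⟨(Finset.univ : Finset (A × Fin k)).toList.map
      (fun q => ((q.1, q.2, ⟨stance F q.1 q.2, stance_mem F q.1 q.2⟩) : Event A k)), ?_⟩
    apply hStatic
    intro a p
    exact stance_append_set ([] ++ E') (fun a p => ⟨stance F a p, stance_mem F a p⟩) a p
  obtain ⟨L₀, h₀⟩ := key F₀
  obtain ⟨L₁, h₁⟩ := key F₁
  have e0 : R ([] ++ E') = (∅ : Finset (Fin k)) := by rw [hE' L₀, h₀, hF₀]
  have e1 : R ([] ++ E') = ({p0} : Finset (Fin k)) := by rw [hE' L₁, h₁, hF₁]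
  rw [e0] at e1
  exact absurd e1.symm (Finset.singleton_ne_empty p0)
end

section
/- There exists an aggregation rule that is both versatile and stable (necessarily non-static): a rule R from event lists to subsets of paragraphs such that every subset of paragraphs is attained as R(E) for some event list E, and for every event list E there exists an extension E' such that any further extension leaves the output unchanged. -/
open Finset

lemma takeWhile_append' {α : Type*} (q : α → Bool) (L M : List α) :
    (L ++ M).takeWhile q = if L.all q then L ++ M.takeWhile q else L.takeWhile q := by
  induction L with
  | nil => simp
  | cons a L ih =>
    by_cases h : q a = true <;> simp [List.takeWhile, h, ih] <;> split <;> simp_all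

/-- There exists an aggregation rule that is both versatile and stable. -/
theorem exists_versatile_stable_rule {A : Type} [Fintype A] [DecidableEq A] [Nonempty A]
    {k : ℕ} (hk : 1 ≤ k) :
    ∃ R : List (Event A k) → Finset (Fin k),
      (∀ P' : Finset (Fin k), ∃ E : List (Event A k), R E = P') ∧ Stable R := by
  classical
  obtain ⟨a₀⟩ := ‹Nonempty A›
  set zero : EventVal := ⟨0, Or.inr (Or.inl rfl)⟩
  set one : EventVal := ⟨1, Or.inr (Or.inr rfl)⟩
  set term : Event A k := (a₀, ⟨0, hk⟩, zero)
  set q : Event A k → Bool := fun e => decide (e ≠ term) with hq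
  refine ⟨fun E => Finset.univ.filter (fun p => (a₀, p, one) ∈ E.takeWhile q), ?_, ?_⟩
  · intro P'
    refine ⟨P'.toList.map (fun p => (a₀, p, one)), ?_⟩
    have hall : (P'.toList.map (fun p => (a₀, p, one))).all q = true := by
      simp only [List.all_eq_true, List.mem_map]
      rintro e ⟨p, -, rfl⟩
      simp [hq, term, one, zero, Prod.ext_iff]
    have : (P'.toList.map (fun p => (a₀, p, one))).takeWhile q
        = P'.toList.map (fun p => (a₀, p, one)) := by
      have := takeWhile_append' q (P'.toList.map (fun p => (a₀, p, one))) []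
      simpa [hall] using this
    ext p
    simp [this, Prod.ext_iff]
  · intro E
    refine ⟨[term], fun E'' => ?_⟩
    have h1 : q term = false := by simp [hq]
    have h2 : ∀ M : List (Event A k), (term :: M).takeWhile q = [] := by
      intro M; simp [List.takeWhile, h1]
    have : (E ++ [term] ++ E'').takeWhile q = (E ++ [term]).takeWhile q := by
      rw [List.append_assoc, takeWhile_append' q E, takeWhile_append' q E]
      simp only [List.singleton_append, h2]
    simp only []
    rw [this]
end
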